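/- For any positive integer c, the generalized Dedekind sum S^2(1,c) = Σ_{j=0}^{c-1} P2(j/c)^2 equals (c^4 + 10c^2 - 6)/(180 c^3), where P2(x) = {x}^2 - {x} + 1/6. -/
import Mathlib


noncomputable def P2 (x : ℝ) : ℝ := Int.fract x ^ 2 - Int.fract x + 1 / 6

lemma sum_pow1 (c : ℕ) : ∑ j ∈ Finset.range c, (j : ℝ) = ((c:ℝ)^2 - c) / 2 := by
  induction c with
  | zero => simp
  | succ n ih => rw [Finset.sum_range_succ, ih]; push_cast; ring

lemma sum_pow2 (c : ℕ) : ∑ j ∈ Finset.range c, (j : ℝ)^2 = (2*(c:ℝ)^3 - 3*(c:ℝ)^2 + c) / 6 := by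
  induction c with
  | zero => simp
  | succ n ih => rw [Finset.sum_range_succ, ih]; push_cast; ring

lemma sum_pow3 (c : ℕ) : ∑ j ∈ Finset.range c, (j : ℝ)^3 = ((c:ℝ)^4 - 2*(c:ℝ)^3 + (c:ℝ)^2) / 4 := by
  induction c with
  | zero => simp
  | succ n ih => rw [Finset.sum_range_succ, ih]; push_cast; ring

lemma sum_pow4 (c : ℕ) : ∑ j ∈ Finset.range c, (j : ℝ)^4 = (6*(c:ℝ)^5 - 15*(c:ℝ)^4 + 10*(c:ℝ)^3 - c) / 30 := by
  induction c with
  | zero => simp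
  | succ n ih => rw [Finset.sum_range_succ, ih]; push_cast; ring

theorem stmt_4 (c : ℕ) (hc : 0 < c) :
    ∑ j ∈ Finset.range c, P2 ((j : ℝ) / c) * P2 ((j : ℝ) / c)
      = ((c : ℝ) ^ 4 + 10 * (c : ℝ) ^ 2 - 6) / (180 * (c : ℝ) ^ 3) := by
  have hc' : (0:ℝ) < c := by exact_mod_cast hc
  have key : ∀ j ∈ Finset.range c,
      P2 ((j : ℝ) / c) * P2 ((j : ℝ) / c)
        = (j:ℝ)^4 * (1/(c:ℝ)^4) - (j:ℝ)^3 * (2/(c:ℝ)^3) + (j:ℝ)^2 * (4/(3*(c:ℝ)^2))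
          - (j:ℝ) * (1/(3*(c:ℝ))) + 1/36 := by
    intro j hj
    have hjc : (j:ℝ) / c < 1 := by
      rw [div_lt_one hc']
      exact_mod_cast Finset.mem_range.mp hj
    have hfr : Int.fract ((j:ℝ)/c) = (j:ℝ)/c :=
      Int.fract_eq_self.mpr ⟨by positivity, hjc⟩
    rw [P2, hfr]
    field_simp
    ring
  rw [Finset.sum_congr rfl key]
  simp only [Finset.sum_add_distrib, Finset.sum_sub_distrib, ← Finset.sum_mul,
    Finset.sum_const, Finset.card_range, nsmul_eq_mul]
  rw [sum_pow1, sum_pow2, sum_pow3, sum_pow4]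
  field_simp
  ring
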